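/- For each real number u ≥ 2 let X_u° := ⋃_{n=1}^∞ (2^{u^n}, 2^{u^n} + u^n) ⊆ ℝ (a union of open intervals). If 2 ≤ v < w are real numbers, then there is no uniformly continuous bijection from X_v° onto X_w°. -/

import Mathlib

/-!
A continuous map sends each interval of `X_v°` into a single interval of `X_w°`. A continuous
injection of an open interval has open image, so the intervals of `X_w°`, being connected, are
exactly the images of the intervals of `X_v°`, through an injective reindexing `g`. Uniform
continuity bounds the diameter of the image of an interval of length `vⁿ` by `vⁿ / δ + 1`, hence
`w^{g n} ≤ vⁿ / δ + 1`. This is impossible: an injective `g : ℕ → ℕ` takes a value `≥ M` at some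
`n ≤ M`, while `(w / v)^M → ∞`.
-/

/-- The set `X_u° = ⋃_{n≥1} (2^{uⁿ}, 2^{uⁿ} + uⁿ)`. -/
noncomputable def XuOpen (u : ℝ) : Set ℝ :=
  ⋃ n ∈ Set.Ici (1 : ℕ), Set.Ioo ((2 : ℝ) ^ (u ^ n)) ((2 : ℝ) ^ (u ^ n) + u ^ n)

open Set Function Filter Topology

theorem IsPreconnected.subset_of_subset_iUnion {α ι : Type*} [TopologicalSpace α] {s : Set α}
    {U : ι → Set α} (hs : IsPreconnected s) (hU : ∀ i, IsOpen (U i))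
    (hUd : Pairwise (Disjoint on U)) (hsU : s ⊆ ⋃ i, U i) {i : ι} (hi : (s ∩ U i).Nonempty) :
    s ⊆ U i := by
  refine hs.subset_left_of_subset_union (hU i) (isOpen_biUnion fun j _ => hU j)
    (disjoint_iUnion₂_right.2 fun j hj => hUd (Ne.symm hj)) (fun x hx => ?_) hi
  obtain ⟨j, hj⟩ := mem_iUnion.1 (hsU hx)
  rcases eq_or_ne j i with rfl | hji
  · exact Or.inl hj
  · exact Or.inr (mem_biUnion hji hj)

theorem IsPreconnected.exists_subset_of_subset_iUnion {α ι : Type*} [TopologicalSpace α]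
    {s : Set α} {U : ι → Set α} (hs : IsPreconnected s) (hne : s.Nonempty)
    (hU : ∀ i, IsOpen (U i)) (hUd : Pairwise (Disjoint on U)) (hsU : s ⊆ ⋃ i, U i) :
    ∃ i, s ⊆ U i := by
  obtain ⟨x, hx⟩ := hne
  obtain ⟨i, hi⟩ := mem_iUnion.1 (hsU hx)
  exact ⟨i, hs.subset_of_subset_iUnion hU hUd hsU ⟨x, hx, hi⟩⟩

section OrderTopology

variable {α β : Type*} [ConditionallyCompleteLinearOrder α] [DenselyOrdered α] [NoMaxOrder α]
  [NoMinOrder α] [TopologicalSpace α] [OrderTopology α] [LinearOrder β] [TopologicalSpace β]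
  [OrderTopology β]

theorem ContinuousOn.isOpen_image_of_injOn {F : α → β} {U : Set α} (hU : IsOpen U)
    (hFc : ContinuousOn F U) (hFi : InjOn F U) : IsOpen (F '' U) := by
  rw [isOpen_iff_mem_nhds]
  rintro _ ⟨x, hx, rfl⟩
  obtain ⟨l, r, ⟨hlx, hxr⟩, hlrU⟩ := mem_nhds_iff_exists_Ioo_subset.1 (hU.mem_nhds hx)
  obtain ⟨p, hlp, hpx⟩ := exists_between hlx
  obtain ⟨q, hxq, hqr⟩ := exists_between hxr
  have hpq : p ≤ q := (hpx.trans hxq).le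
  have hsub : Icc p q ⊆ U := (Icc_subset_Ioo hlp hqr).trans hlrU
  have hnhds : F '' Ioo p q ∈ 𝓝 (F x) := by
    refine IsOpen.mem_nhds ?_ (mem_image_of_mem F ⟨hpx, hxq⟩)
    rcases (hFc.mono hsub).strictMonoOn_of_injOn_Icc' hpq (hFi.mono hsub) with hmono | hanti
    · rw [(hFc.mono hsub).image_Ioo_of_strictMonoOn hpq hmono]; exact isOpen_Ioo
    · rw [(hFc.mono hsub).image_Ioo_of_strictAntiOn hpq hanti]; exact isOpen_Ioo
  exact mem_of_superset hnhds (image_mono (Ioo_subset_Icc_self.trans hsub))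

theorem Set.BijOn.exists_injective_image_eq {ι κ : Type*} {U : ι → Set α} {V : κ → Set β}
    (hUo : ∀ i, IsOpen (U i)) (hUc : ∀ i, IsPreconnected (U i)) (hUne : ∀ i, (U i).Nonempty)
    (hUd : Pairwise (Disjoint on U)) (hVo : ∀ j, IsOpen (V j)) (hVc : ∀ j, IsPreconnected (V j))
    (hVd : Pairwise (Disjoint on V)) {F : α → β} (hF : BijOn F (⋃ i, U i) (⋃ j, V j))
    (hFc : ContinuousOn F (⋃ i, U i)) :
    ∃ g : ι → κ, Injective g ∧ ∀ i, F '' U i = V (g i) := by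
  have hFUc (i : ι) : ContinuousOn F (U i) := hFc.mono (subset_iUnion U i)
  have hFUo (i : ι) : IsOpen (F '' U i) :=
    (hFUc i).isOpen_image_of_injOn (hUo i) (hF.injOn.mono (subset_iUnion U i))
  have hFUd : Pairwise (Disjoint on fun i => F '' U i) := fun i j hij =>
    (hUd hij).image hF.injOn (subset_iUnion U i) (subset_iUnion U j)
  have hFUV (i : ι) : F '' U i ⊆ ⋃ j, V j := (image_mono (subset_iUnion U i)).trans hF.image_eq.le
  have hVFU : ⋃ j, V j ⊆ ⋃ i, F '' U i := by rw [← image_iUnion, hF.image_eq]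
  choose g hg using fun i => ((hUc i).image F (hFUc i)).exists_subset_of_subset_iUnion
    ((hUne i).image F) hVo hVd (hFUV i)
  have himage (i : ι) : F '' U i = V (g i) := by
    refine (hg i).antisymm ((hVc (g i)).subset_of_subset_iUnion hFUo hFUd
      ((subset_iUnion V (g i)).trans hVFU) ?_)
    obtain ⟨y, hy⟩ := (hUne i).image F
    exact ⟨y, hg i hy, hy⟩
  refine ⟨g, fun i j hij => ?_, himage⟩
  by_contra hne
  obtain ⟨y, hy⟩ := (hUne i).image F
  exact (hFUd hne).ne_of_mem hy (show y ∈ F '' U j by rw [himage, ← hij, ← himage]; exact hy) rfl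

end OrderTopology

theorem Convex.dist_apply_le_of_forall_dist_lt {E β : Type*} [NormedAddCommGroup E]
    [NormedSpace ℝ E] [PseudoMetricSpace β] {s : Set E} (hs : Convex ℝ s) {F : E → β}
    {δ ε : ℝ} (hδ : 0 < δ) (hF : ∀ x ∈ s, ∀ y ∈ s, dist x y < δ → dist (F x) (F y) ≤ ε)
    {x y : E} (hx : x ∈ s) (hy : y ∈ s) : dist (F x) (F y) ≤ ε * (dist x y / δ + 1) := by
  have hε : 0 ≤ ε := dist_nonneg.trans (hF x hx x hx (by rwa [dist_self]))
  -- split `[x, y]` into `k` pieces, each shorter than `δ`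
  set k : ℕ := ⌊dist x y / δ⌋₊ + 1
  have hk : (0 : ℝ) < k := by positivity
  have hk_gt : dist x y / δ < k := by exact_mod_cast Nat.lt_floor_add_one (dist x y / δ)
  have hk_le : (k : ℝ) ≤ dist x y / δ + 1 := by
    have := Nat.floor_le (div_nonneg (dist_nonneg (x := x) (y := y)) hδ.le); push_cast [k]; linarith
  set p : ℕ → E := fun i => AffineMap.lineMap x y ((i : ℝ) / k)
  have hp_mem {i : ℕ} (hi : i ≤ k) : p i ∈ s :=
    hs.lineMap_mem hx hy ⟨by positivity, div_le_one_of_le₀ (by exact_mod_cast hi) hk.le⟩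
  have hp_step (i : ℕ) : dist (p i) (p (i + 1)) < δ := by
    rw [dist_lineMap_lineMap, Real.dist_eq, ← sub_div, abs_div, abs_of_pos hk]
    push_cast
    rw [sub_add_cancel_left, abs_neg, abs_one, one_div_mul_eq_div, div_lt_iff₀ hk]
    rwa [div_lt_iff₀ hδ, mul_comm] at hk_gt
  calc dist (F x) (F y) = dist (F (p 0)) (F (p k)) := by simp [p, hk.ne']
    _ ≤ ∑ i ∈ Finset.range k, dist (F (p i)) (F (p (i + 1))) := dist_le_range_sum_dist (F ∘ p) k
    _ ≤ ∑ i ∈ Finset.range k, ε := Finset.sum_le_sum fun i hi =>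
          hF _ (hp_mem (Finset.mem_range.1 hi).le) _ (hp_mem (Finset.mem_range.1 hi)) (hp_step i)
    _ = k * ε := by simp
    _ ≤ ε * (dist x y / δ + 1) := by rw [mul_comm]; exact mul_le_mul_of_nonneg_left hk_le hε

theorem pairwise_disjoint_Ioo_add {a ℓ : ℕ → ℝ} (hℓ : ∀ n, 0 ≤ ℓ n)
    (ha : ∀ n, a n + ℓ n ≤ a (n + 1)) : Pairwise (Disjoint on fun n => Ioo (a n) (a n + ℓ n)) := by
  have hmono : Monotone a := monotone_nat_of_le_succ fun n => by linarith [ha n, hℓ n]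
  refine (pairwise_disjoint_on _).2 fun m k hmk => ?_
  have hgap : a m + ℓ m ≤ a k := (ha m).trans (hmono hmk)
  exact Set.disjoint_left.2 fun x hxm hxk => lt_asymm (hxm.2.trans_le hgap) hxk.1

theorem Set.BijOn.exists_injective_length_le {a ℓ b L : ℕ → ℝ} (hℓ : ∀ n, 0 < ℓ n)
    (ha : ∀ n, a n + ℓ n ≤ a (n + 1)) (hL : ∀ n, 0 ≤ L n) (hb : ∀ n, b n + L n ≤ b (n + 1))
    {F : ℝ → ℝ} (hF : BijOn F (⋃ n, Ioo (a n) (a n + ℓ n)) (⋃ n, Ioo (b n) (b n + L n)))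
    (hFuc : UniformContinuousOn F (⋃ n, Ioo (a n) (a n + ℓ n))) :
    ∃ g : ℕ → ℕ, Injective g ∧ ∃ δ > 0, ∀ n, L (g n) ≤ ℓ n / δ + 1 := by
  obtain ⟨g, hg, himage⟩ := hF.exists_injective_image_eq (fun _ => isOpen_Ioo)
    (fun _ => isPreconnected_Ioo) (fun n => nonempty_Ioo.2 (lt_add_of_pos_right _ (hℓ n)))
    (pairwise_disjoint_Ioo_add (fun n => (hℓ n).le) ha) (fun _ => isOpen_Ioo)
    (fun _ => isPreconnected_Ioo) (pairwise_disjoint_Ioo_add hL hb) hFuc.continuousOn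
  obtain ⟨δ, hδ, hFδ⟩ := Metric.uniformContinuousOn_iff.1 hFuc 1 one_pos
  refine ⟨g, hg, δ, hδ, fun n => ?_⟩
  rw [← add_sub_cancel_left (b (g n)) (L (g n)), ← Real.diam_Ioo (by linarith [hL (g n)]),
    ← himage n]
  refine Metric.diam_le_of_forall_dist_le (by have := hℓ n; positivity) ?_
  rintro _ ⟨x, hx, rfl⟩ _ ⟨y, hy, rfl⟩
  have hxy : dist x y ≤ ℓ n := by
    simpa using Real.dist_le_of_mem_Icc (Ioo_subset_Icc_self hx) (Ioo_subset_Icc_self hy)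
  calc dist (F x) (F y) ≤ 1 * (dist x y / δ + 1) :=
        (convex_Ioo _ _).dist_apply_le_of_forall_dist_lt hδ (fun x hx y hy hxy =>
          (hFδ x (mem_iUnion_of_mem n hx) y (mem_iUnion_of_mem n hy) hxy).le) hx hy
    _ ≤ ℓ n / δ + 1 := by rw [one_mul]; gcongr

theorem Function.Injective.exists_le_apply {g : ℕ → ℕ} (hg : Injective g) (M : ℕ) :
    ∃ n ≤ M, M ≤ g n := by
  by_contra! h
  have := Finset.card_le_card_of_injOn g (s := Finset.range (M + 1)) (t := Finset.range M)
    (fun n hn => Finset.mem_range.2 (h n (Nat.lt_succ_iff.1 (Finset.mem_range.1 hn)))) hg.injOn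
  simp at this

theorem Function.Injective.exists_mul_add_lt_comp {ℓ L : ℕ → ℝ} (hℓ : Monotone ℓ)
    (hℓ0 : 0 < ℓ 0) (hL : Monotone L) (hLℓ : Tendsto (fun n => L n / ℓ n) atTop atTop)
    {g : ℕ → ℕ} (hg : Injective g) (C D : ℝ) : ∃ n, C * ℓ n + D < L (g n) := by
  obtain ⟨M, hM⟩ := (hLℓ.eventually_gt_atTop (|C| + |D| / ℓ 0)).exists
  obtain ⟨n, hnM, hMg⟩ := hg.exists_le_apply M
  have hℓM : ℓ 0 ≤ ℓ M := hℓ (Nat.zero_le M)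
  rw [lt_div_iff₀ (hℓ0.trans_le hℓM)] at hM
  have hC : C * ℓ n ≤ |C| * ℓ M :=
    (mul_le_mul_of_nonneg_right (le_abs_self C) (hℓ0.le.trans (hℓ (Nat.zero_le n)))).trans
      (mul_le_mul_of_nonneg_left (hℓ hnM) (abs_nonneg C))
  have hD : D ≤ |D| * (ℓ M / ℓ 0) :=
    (le_abs_self D).trans (le_mul_of_one_le_right (abs_nonneg D) ((one_le_div hℓ0).2 hℓM))
  refine ⟨n, ?_⟩
  calc C * ℓ n + D ≤ |C| * ℓ M + |D| * (ℓ M / ℓ 0) := add_le_add hC hD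
    _ = (|C| + |D| / ℓ 0) * ℓ M := by ring
    _ < L M := hM
    _ ≤ L (g n) := hL hMg

theorem exists_bijOn_uniformContinuousOn {α β : Type*} [UniformSpace α] [UniformSpace β]
    [Nonempty β] {s : Set α} {t : Set β} (f : s → t) (hf : Bijective f)
    (huc : UniformContinuous f) : ∃ F : α → β, BijOn F s t ∧ UniformContinuousOn F s := by
  set F : α → β := extend Subtype.val (fun x => (f x : β)) fun _ => Classical.arbitrary β
  have hF (x : s) : F x = f x := Subtype.val_injective.extend_apply _ _ x
  have hmaps : MapsTo F s t := fun x hx => hF ⟨x, hx⟩ ▸ (f ⟨x, hx⟩).2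
  have hrestrict : hmaps.restrict F s t = f := funext fun x => Subtype.ext (hF x)
  refine ⟨F, ⟨hmaps, hmaps.restrict_inj.1 (hrestrict ▸ hf.1),
    hmaps.restrict_surjective_iff.1 (hrestrict ▸ hf.2)⟩, ?_⟩
  rw [uniformContinuousOn_iff_restrict, show s.domRestrict F = Subtype.val ∘ f from funext hF]
  exact uniformContinuous_subtype_val.comp huc

theorem two_rpow_add_le_two_rpow_mul {t u : ℝ} (ht : 1 ≤ t) (hu : 2 ≤ u) :
    (2 : ℝ) ^ t + t ≤ 2 ^ (u * t) := by
  have hbernoulli : 1 + t ≤ (2 : ℝ) ^ t := by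
    simpa [one_add_one_eq_two] using one_add_mul_self_le_rpow_one_add (s := 1) (by norm_num) ht
  calc (2 : ℝ) ^ t + t ≤ 2 ^ t * 2 ^ t := by nlinarith
    _ = 2 ^ (2 * t) := by rw [two_mul, Real.rpow_add two_pos]
    _ ≤ 2 ^ (u * t) := Real.rpow_le_rpow_of_exponent_le one_le_two (by nlinarith)

theorem XuOpen_eq_iUnion (u : ℝ) :
    XuOpen u = ⋃ n : ℕ, Ioo ((2 : ℝ) ^ u ^ (n + 1)) (2 ^ u ^ (n + 1) + u ^ (n + 1)) :=
  iUnion_ge_eq_iUnion_nat_add _ 1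

theorem two_rpow_pow_add_pow_le {u : ℝ} (hu : 2 ≤ u) (n : ℕ) :
    (2 : ℝ) ^ u ^ n + u ^ n ≤ 2 ^ u ^ (n + 1) := by
  rw [pow_succ']
  exact two_rpow_add_le_two_rpow_mul (one_le_pow₀ (by linarith)) hu

/-- If `2 ≤ v < w` then there is no uniformly continuous
bijection from `X_v°` onto `X_w°`. -/
theorem stmt_2 (v w : ℝ) (hv : 2 ≤ v) (hvw : v < w) :
    ¬ ∃ f : ↥(XuOpen v) → ↥(XuOpen w), Function.Bijective f ∧ UniformContinuous f := by
  rintro ⟨f, hf, hfuc⟩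
  obtain ⟨F, hF, hFuc⟩ := exists_bijOn_uniformContinuousOn f hf hfuc
  simp only [XuOpen_eq_iUnion] at hF hFuc
  have hw : 2 ≤ w := hv.trans hvw.le
  obtain ⟨g, hg, δ, hδ, hgδ⟩ := hF.exists_injective_length_le (fun n => by positivity)
    (fun n => two_rpow_pow_add_pow_le hv (n + 1)) (fun n => by positivity)
    (fun n => two_rpow_pow_add_pow_le hw (n + 1)) hFuc
  have hratio : Tendsto (fun n : ℕ => w ^ (n + 1) / v ^ (n + 1)) atTop atTop := by
    simpa only [Function.comp_def, div_pow] using (tendsto_pow_atTop_atTop_of_one_lt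
      ((one_lt_div (by linarith)).2 hvw)).comp (tendsto_add_atTop_nat 1)
  obtain ⟨n, hn⟩ := hg.exists_mul_add_lt_comp (ℓ := fun n => v ^ (n + 1))
    (L := fun n => w ^ (n + 1)) (fun m k h => pow_le_pow_right₀ (by linarith) (by omega))
    (by positivity) (fun m k h => pow_le_pow_right₀ (by linarith) (by omega)) hratio δ⁻¹ 1
  exact (hgδ n).not_gt (by simpa only [div_eq_inv_mul] using hn)
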